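/- The fused traversal returning a pair computes exactly (Odd t, Even t): for all trees t, Fused t = (Odd t, Even t). -/

import Mathlib

namespace Retreet

inductive BTree where
  | nil : BTree
  | node : BTree → BTree → BTree

mutual
def oddCnt : BTree → Nat
  | .nil => 0
  | .node l r => evenCnt l + evenCnt r + 1
def evenCnt : BTree → Nat
  | .nil => 0
  | .node l r => oddCnt l + oddCnt r
end

def Fused : BTree → Nat × Nat
  | .nil => (0, 0)
  | .node l r => ((Fused l).2 + (Fused r).2 + 1, (Fused l).1 + (Fused r).1)

theorem fused_correct (t : BTree) : Fused t = (oddCnt t, evenCnt t) := by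
  induction t with
  | nil => rfl
  | node l r ihl ihr => rw [Fused, ihl, ihr, oddCnt, evenCnt]

end Retreet
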